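/- arXiv:1807.01519 — 2 statements merged into one kernel-verified Lean document; each statement's English description precedes it below -/
import Mathlib

section
/- Let E_c(x→y) = Σ_i max(0, f(x)_i - g(y)_i)² and E_c(x,y) = E_c(x→y) + E_c(y→x). Then for any x, y, z: (1/2)(E_c(x,z) + E_c(y,z)) ≤ max(E_c(x→z), E_c(y→z)) + max(E_c(z→x), E_c(z→y)) ≤ E_c((x∨y)→z) + E_c(z→(x∧y)), where x∨y denotes taking coordinate-wise max of f-coordinates and x∧y denotes coordinate-wise min of g-coordinates. -/
theorem corollary_bound {S : Type*} (D : ℕ) (f g : S → Fin D → ℝ) (x y z : S)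
    (Ec1 : S → S → ℝ) (Ec : S → S → ℝ)
    (hEc1 : ∀ u v, Ec1 u v = ∑ i, (max 0 (f u i - g v i))^2)
    (hEc : ∀ u v, Ec u v = Ec1 u v + Ec1 v u) :
    (1/2) * (Ec x z + Ec y z) ≤ max (Ec1 x z) (Ec1 y z) + max (Ec1 z x) (Ec1 z y) ∧
    max (Ec1 x z) (Ec1 y z) + max (Ec1 z x) (Ec1 z y)
      ≤ (∑ i, (max 0 (max (f x i) (f y i) - g z i))^2)
        + (∑ i, (max 0 (f z i - min (g x i) (g y i)))^2) := by
  constructor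
  · rw [hEc, hEc]
    have h1 : Ec1 x z ≤ max (Ec1 x z) (Ec1 y z) := le_max_left _ _
    have h2 : Ec1 y z ≤ max (Ec1 x z) (Ec1 y z) := le_max_right _ _
    have h3 : Ec1 z x ≤ max (Ec1 z x) (Ec1 z y) := le_max_left _ _
    have h4 : Ec1 z y ≤ max (Ec1 z x) (Ec1 z y) := le_max_right _ _
    linarith
  · have key1 : ∀ u : S, (∀ i, f u i ≤ max (f x i) (f y i)) →
        Ec1 u z ≤ ∑ i, (max 0 (max (f x i) (f y i) - g z i))^2 := by
      intro u hu
      rw [hEc1]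
      apply Finset.sum_le_sum
      intro i _
      have : max 0 (f u i - g z i) ≤ max 0 (max (f x i) (f y i) - g z i) :=
        max_le_max le_rfl (by linarith [hu i])
      exact pow_le_pow_left₀ (le_max_left _ _) this 2
    have key2 : ∀ u : S, (∀ i, min (g x i) (g y i) ≤ g u i) →
        Ec1 z u ≤ ∑ i, (max 0 (f z i - min (g x i) (g y i)))^2 := by
      intro u hu
      rw [hEc1]
      apply Finset.sum_le_sum
      intro i _
      have : max 0 (f z i - g u i) ≤ max 0 (f z i - min (g x i) (g y i)) :=
        max_le_max le_rfl (by linarith [hu i])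
      exact pow_le_pow_left₀ (le_max_left _ _) this 2
    apply add_le_add
    · exact max_le (key1 x fun i => le_max_left _ _) (key1 y fun i => le_max_right _ _)
    · exact max_le (key2 x fun i => min_le_left _ _) (key2 y fun i => min_le_right _ _)
end

section
/- If ‖f(x)‖₂ = ‖f(y)‖₂ = ‖g(x)‖₂ = ‖g(y)‖₂ = 1 and f(x), f(y), g(x), g(y) have nonnegative coordinates, then the interchangeability energy E_r(x,y) = ‖f(x) ∨ f(y)‖₂² - ‖g(x) ∧ g(y)‖₂² is nonnegative, and it equals zero if and only if f(x) = f(y) and g(x) = g(y). -/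
theorem interchangeability_energy_nonneg (D : ℕ) (fx fy gx gy : Fin D → ℝ)
    (hfx : ∀ i, 0 ≤ fx i) (hfy : ∀ i, 0 ≤ fy i)
    (hgx : ∀ i, 0 ≤ gx i) (hgy : ∀ i, 0 ≤ gy i)
    (nfx : ∑ i, (fx i)^2 = 1) (nfy : ∑ i, (fy i)^2 = 1)
    (ngx : ∑ i, (gx i)^2 = 1) (ngy : ∑ i, (gy i)^2 = 1) :
    0 ≤ (∑ i, (max (fx i) (fy i))^2) - (∑ i, (min (gx i) (gy i))^2) ∧
    ((∑ i, (max (fx i) (fy i))^2) - (∑ i, (min (gx i) (gy i))^2) = 0 ↔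
      fx = fy ∧ gx = gy) := by
  have hmaxx : ∀ i : Fin D, (fx i)^2 ≤ (max (fx i) (fy i))^2 := fun i =>
    pow_le_pow_left₀ (hfx i) (le_max_left _ _) 2
  have hmaxy : ∀ i : Fin D, (fy i)^2 ≤ (max (fx i) (fy i))^2 := fun i =>
    pow_le_pow_left₀ (hfy i) (le_max_right _ _) 2
  have hminx : ∀ i : Fin D, (min (gx i) (gy i))^2 ≤ (gx i)^2 := fun i =>
    pow_le_pow_left₀ (le_min (hgx i) (hgy i)) (min_le_left _ _) 2
  have hminy : ∀ i : Fin D, (min (gx i) (gy i))^2 ≤ (gy i)^2 := fun i =>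
    pow_le_pow_left₀ (le_min (hgx i) (hgy i)) (min_le_right _ _) 2
  have h1 : (1:ℝ) ≤ ∑ i, (max (fx i) (fy i))^2 := by
    rw [← nfx]; exact Finset.sum_le_sum fun i _ => hmaxx i
  have h2 : ∑ i, (min (gx i) (gy i))^2 ≤ 1 := by
    rw [← ngx]; exact Finset.sum_le_sum fun i _ => hminx i
  refine ⟨by linarith, ?_, ?_⟩
  · intro h
    have hM : ∑ i, (max (fx i) (fy i))^2 = 1 := by linarith
    have hm : ∑ i, (min (gx i) (gy i))^2 = 1 := by linarith
    have hMx : ∑ i, ((max (fx i) (fy i))^2 - (fx i)^2) = 0 := by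
      rw [Finset.sum_sub_distrib, hM, nfx]; ring
    have hMy : ∑ i, ((max (fx i) (fy i))^2 - (fy i)^2) = 0 := by
      rw [Finset.sum_sub_distrib, hM, nfy]; ring
    have hmx : ∑ i, ((gx i)^2 - (min (gx i) (gy i))^2) = 0 := by
      rw [Finset.sum_sub_distrib, hm, ngx]; ring
    have hmy : ∑ i, ((gy i)^2 - (min (gx i) (gy i))^2) = 0 := by
      rw [Finset.sum_sub_distrib, hm, ngy]; ring
    have eMx := (Finset.sum_eq_zero_iff_of_nonneg
      (fun i _ => sub_nonneg.mpr (hmaxx i))).mp hMx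
    have eMy := (Finset.sum_eq_zero_iff_of_nonneg
      (fun i _ => sub_nonneg.mpr (hmaxy i))).mp hMy
    have emx := (Finset.sum_eq_zero_iff_of_nonneg
      (fun i _ => sub_nonneg.mpr (hminx i))).mp hmx
    have emy := (Finset.sum_eq_zero_iff_of_nonneg
      (fun i _ => sub_nonneg.mpr (hminy i))).mp hmy
    have sq_inj : ∀ a b : ℝ, 0 ≤ a → 0 ≤ b → a^2 = b^2 → a = b := by
      intro a b ha hb hab
      nlinarith
    constructor
    · funext i
      have h1 := sq_inj _ _ (hfx i) (le_trans (hfx i) (le_max_left _ _))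
        (by have := eMx i (Finset.mem_univ i); linarith)
      have h2 := sq_inj _ _ (hfy i) (le_trans (hfy i) (le_max_right _ _))
        (by have := eMy i (Finset.mem_univ i); linarith)
      exact h1.trans h2.symm
    · funext i
      have h1 := sq_inj _ _ (le_min (hgx i) (hgy i)) (hgx i)
        (by have := emx i (Finset.mem_univ i); linarith)
      have h2 := sq_inj _ _ (le_min (hgx i) (hgy i)) (hgy i)
        (by have := emy i (Finset.mem_univ i); linarith)
      exact h1.symm.trans h2
  · rintro ⟨hf, hg⟩
    subst hf; subst hg
    simp only [max_self, min_self]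
    rw [nfx, ngx]; ring
end
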